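/- Let z < 0, u₀ = (2/π²)(√(1−π²z) − 1), v₀ = −z − u₀. Then the optimal density μ_*(a) = [(1/π)√(a−u₀) + (1/(2π²)) log|(√(a−u₀)+√v₀)/(√(a−u₀)−√v₀)|]·1_{a>u₀} is nonnegative: μ_*(a) ≥ 0 for every a ∈ ℝ. -/
import Mathlib


open Real Filter Set MeasureTheory

/-- `u₀ = (2/π²)(√(1−π²z) − 1)`. -/
noncomputable def u0 (z : ℝ) : ℝ := 2 / π ^ 2 * (Real.sqrt (1 - π ^ 2 * z) - 1)

/-- `v₀ = −z − u₀`. -/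
noncomputable def v0 (z : ℝ) : ℝ := -z - u0 z

/-- The optimal density
`μ_*(a) = [(1/π)√(a−u₀) + (1/(2π²)) log|(√(a−u₀)+√v₀)/(√(a−u₀)−√v₀)|]·1_{a>u₀}`. -/
noncomputable def mustar (z : ℝ) (a : ℝ) : ℝ :=
  if u0 z < a then
    1 / π * Real.sqrt (a - u0 z)
      + 1 / (2 * π ^ 2) * Real.log |(Real.sqrt (a - u0 z) + Real.sqrt (v0 z))
          / (Real.sqrt (a - u0 z) - Real.sqrt (v0 z))|
  else 0

lemma log_abs_ratio_nonneg (s t : ℝ) (hs : 0 ≤ s) (ht : 0 ≤ t) :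
    0 ≤ Real.log |(s + t) / (s - t)| := by
  rcases eq_or_ne s t with h | h
  · simp [h]
  · have hd : s - t ≠ 0 := sub_ne_zero.mpr h
    apply Real.log_nonneg
    rw [abs_div, le_div_iff₀ (abs_pos.mpr hd), one_mul]
    calc |s - t| ≤ |s| + |t| := abs_sub _ _
      _ = s + t := by rw [abs_of_nonneg hs, abs_of_nonneg ht]
      _ = |s + t| := (abs_of_nonneg (by linarith)).symm

/-- For `z < 0`, the optimal density `μ_*` is nonnegative. -/
theorem mustar_nonneg (z : ℝ) (hz : z < 0) (a : ℝ) : 0 ≤ mustar z a := by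
  unfold mustar
  split
  · have h1 : 0 ≤ 1 / π * Real.sqrt (a - u0 z) :=
      mul_nonneg (by positivity) (Real.sqrt_nonneg _)
    have h2 := log_abs_ratio_nonneg (Real.sqrt (a - u0 z)) (Real.sqrt (v0 z))
      (Real.sqrt_nonneg _) (Real.sqrt_nonneg _)
    have : (0:ℝ) ≤ 1 / (2 * π ^ 2) := by positivity
    nlinarith
  · exact le_refl 0
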